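/- Let N = p^k · m^2 be an odd perfect number, where p is a prime with p ≡ k ≡ 1 (mod 4) and gcd(p, m) = 1. Then p^k < (2/3) · m^2. -/

import Mathlib

/-!
Write `σ(m²) = t·p^k`; then `σ(p^k)·t = 2m²`, and `t` is odd since `σ(p^k)` is even (`k` odd)
while `m` is odd. If `t ≥ 3`, then `3(p^k + 1) ≤ σ(p^k)·t = 2m²`.

The case `t = 1` is impossible. For a prime `q` with `q^a ∥ m`, `a ≥ 1`, the factor `σ(q^{2a})`
divides `σ(m²) = p^k`, so it is some `p^b`, and `p^b - 1 = q·σ(q^{2a-1})` has `q`-adic valuation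
exactly `1`. Since `p^{k+1} - 1` divides `p^{b(k+1)} - 1`, lifting the exponent gives
`2a ≤ v_q(p^{k+1} - 1) ≤ 1 + v_q(k+1)`. Hence `m ∣ k + 1`, which contradicts
`5^k ≤ p^k < σ(p^k) = 2m²` unless `k = m = 1`, where `σ(m²) = 1 ≠ p`.
-/

open ArithmeticFunction
open scoped ArithmeticFunction.sigma

namespace ArithmeticFunction

variable {p : ℕ}

theorem sigma_one_prime_pow_succ (hp : p.Prime) (j : ℕ) :
    σ 1 (p ^ (j + 1)) = p * σ 1 (p ^ j) + 1 := by
  rw [sigma_one_apply_prime_pow hp, sigma_one_apply_prime_pow hp, geom_sum_succ]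

theorem sigma_one_prime_pow_mul_sub_one (hp : p.Prime) (j : ℕ) :
    σ 1 (p ^ j) * (p - 1) = p ^ (j + 1) - 1 := by
  rw [sigma_one_apply_prime_pow hp, geom_sum_mul_of_one_le hp.one_le]

theorem lt_sigma_one {n : ℕ} (hn : 1 < n) : n < σ 1 n := by
  have h1 := Finset.single_le_sum (fun d _ => Nat.zero_le d)
    (Nat.one_mem_properDivisors_iff_one_lt.mpr hn)
  rw [sigma_one_apply, Nat.sum_divisors_eq_sum_properDivisors_add_self]
  omega

theorem not_dvd_sigma_one_prime_pow (hp : p.Prime) (j : ℕ) : ¬ p ∣ σ 1 (p ^ j) := by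
  cases j with
  | zero => simpa using hp.one_lt.ne'
  | succ i =>
    rw [sigma_one_prime_pow_succ hp, Nat.dvd_add_right (dvd_mul_right p _)]
    exact hp.not_dvd_one

theorem padicValNat_sigma_one_prime_pow_sub_one (hp : p.Prime) {j : ℕ} (hj : j ≠ 0) :
    padicValNat p (σ 1 (p ^ j) - 1) = 1 := by
  have := Fact.mk hp
  obtain ⟨i, rfl⟩ := Nat.exists_eq_succ_of_ne_zero hj
  rw [sigma_one_prime_pow_succ hp, Nat.add_sub_cancel, padicValNat.mul hp.ne_zero
    (sigma_pos 1 _ (pow_ne_zero _ hp.ne_zero)).ne', padicValNat_self,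
    padicValNat.eq_zero_of_not_dvd (not_dvd_sigma_one_prime_pow hp i)]

theorem even_sigma_one_prime_pow_iff (hp : p.Prime) (hp2 : Odd p) {j : ℕ} :
    Even (σ 1 (p ^ j)) ↔ Odd j := by
  induction j with
  | zero => simp
  | succ i ih =>
    simp [sigma_one_prime_pow_succ hp, Nat.even_add_one, Nat.even_mul, hp2, ih, parity_simps]

theorem sigma_one_pow_padicValNat_dvd (hp : p.Prime) {n : ℕ} (hn : n ≠ 0) :
    σ 1 (p ^ padicValNat p n) ∣ σ 1 n := by
  rw [← Nat.factorization_def n hp]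
  conv_rhs => rw [← Nat.ordProj_mul_ordCompl_eq_self n p]
  rw [isMultiplicative_sigma.map_mul_of_coprime ((Nat.coprime_ordCompl hp hn).pow_left _)]
  exact dvd_mul_right _ _

theorem sigma_one_eq_two_mul_of_perfect {n : ℕ} (h : n.Perfect) : σ 1 n = 2 * n := by
  rw [sigma_one_apply]
  exact (Nat.perfect_iff_sum_divisors_eq_two_mul h.2).mp h

end ArithmeticFunction

theorem padicValNat_pow_sub_one_le {q x b n : ℕ} [hq : Fact q.Prime] (hq2 : Odd q) (hx : 1 < x)
    (hb : b ≠ 0) (hqb : q ∣ x ^ b - 1) (hn : n ≠ 0) :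
    padicValNat q (x ^ n - 1) ≤ padicValNat q (x ^ b - 1) + padicValNat q n := by
  have hxb : 1 < x ^ b := Nat.one_lt_pow hb hx
  have hqxb : ¬ q ∣ x ^ b := fun h =>
    hq.out.not_dvd_one ((Nat.dvd_sub_iff_right (Nat.one_le_of_lt hxb) h).mp hqb)
  have hdvd : x ^ n - 1 ∣ (x ^ b) ^ n - 1 := by
    simpa only [one_pow, ← pow_mul, mul_comm b] using Nat.sub_dvd_pow_sub_pow (x ^ n) 1 b
  have hne : (x ^ b) ^ n - 1 ≠ 0 := Nat.sub_ne_zero_of_lt (Nat.one_lt_pow hn hxb)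
  calc padicValNat q (x ^ n - 1)
      ≤ padicValNat q ((x ^ b) ^ n - 1 ^ n) := by
        rw [one_pow, ← padicValNat_dvd_iff_le hne]
        exact pow_padicValNat_dvd.trans hdvd
    _ = padicValNat q (x ^ b - 1) + padicValNat q n :=
        padicValNat.pow_sub_pow hq2 hxb hqb hqxb hn

theorem two_mul_sq_succ_lt_five_pow {k : ℕ} (hk : 2 ≤ k) : 2 * (k + 1) ^ 2 < 5 ^ k := by
  induction k, hk using Nat.le_induction with
  | base => norm_num
  | succ k hk ih => rw [pow_succ 5 k]; nlinarith

section SigmaSqEqPrimePow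

variable {p k m : ℕ}

theorem padicValNat_le_padicValNat_succ_of_sigma_sq_eq_prime_pow (hp : p.Prime) (hm : Odd m)
    (hσm : σ 1 (m ^ 2) = p ^ k) (hdvd : m ^ 2 ∣ p ^ (k + 1) - 1) {q : ℕ} (hq : q.Prime) :
    padicValNat q m ≤ padicValNat q (k + 1) := by
  have := Fact.mk hq
  rcases (em (q ∣ m)).symm with hqm | hqm
  · simp [padicValNat.eq_zero_of_not_dvd hqm]
  set a := padicValNat q m
  have hm0 : m ≠ 0 := hm.pos.ne'
  have ha : a ≠ 0 := Nat.one_le_iff_ne_zero.mp (one_le_padicValNat_of_dvd hm0 hqm)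
  have hσq : σ 1 (q ^ (2 * a)) ∣ p ^ k := by
    simpa only [padicValNat.pow, hσm, mul_comm 2] using
      sigma_one_pow_padicValNat_dvd hq (pow_ne_zero 2 hm0)
  obtain ⟨b, -, hb⟩ := (Nat.dvd_prime_pow hp).mp hσq
  have hb0 : b ≠ 0 := by
    rintro rfl
    have h1 : 1 < q ^ (2 * a) := Nat.one_lt_pow (by omega) hq.one_lt
    have h2 := lt_sigma_one h1
    rw [hb, pow_zero] at h2
    omega
  have hvb : padicValNat q (p ^ b - 1) = 1 :=
    hb ▸ padicValNat_sigma_one_prime_pow_sub_one hq (by omega)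
  have hv : 2 * a ≤ padicValNat q (p ^ (k + 1) - 1) := by
    have hne : p ^ (k + 1) - 1 ≠ 0 :=
      Nat.sub_ne_zero_of_lt (Nat.one_lt_pow k.succ_ne_zero hp.one_lt)
    rw [← padicValNat_dvd_iff_le hne, pow_mul']
    exact (pow_dvd_pow_of_dvd pow_padicValNat_dvd 2).trans hdvd
  have := padicValNat_pow_sub_one_le (hm.of_dvd_nat hqm) hp.one_lt hb0
    (dvd_of_one_le_padicValNat hvb.ge) (n := k + 1) k.succ_ne_zero
  omega

theorem dvd_succ_of_sigma_sq_eq_prime_pow (hp : p.Prime) (hm : Odd m)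
    (hσm : σ 1 (m ^ 2) = p ^ k) (hdvd : m ^ 2 ∣ p ^ (k + 1) - 1) : m ∣ k + 1 := by
  refine (Nat.factorization_prime_le_iff_dvd hm.pos.ne' k.succ_ne_zero).mp fun q hq => ?_
  simpa only [Nat.factorization_def _ hq] using
    padicValNat_le_padicValNat_succ_of_sigma_sq_eq_prime_pow hp hm hσm hdvd hq

theorem sigma_sq_ne_prime_pow (hp : p.Prime) (hp5 : 5 ≤ p) (hm : Odd m)
    (hσp : σ 1 (p ^ k) = 2 * m ^ 2) : σ 1 (m ^ 2) ≠ p ^ k := by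
  intro hσm
  have hdvd : m ^ 2 ∣ p ^ (k + 1) - 1 :=
    ⟨2 * (p - 1), by rw [← sigma_one_prime_pow_mul_sub_one hp, hσp]; ring⟩
  have hmk : m ≤ k + 1 :=
    Nat.le_of_dvd k.succ_pos (dvd_succ_of_sigma_sq_eq_prime_pow hp hm hσm hdvd)
  have hk0 : k ≠ 0 := by
    rintro rfl
    simp only [pow_zero, sigma_one] at hσp
    omega
  have hlt : p ^ k < 2 * m ^ 2 := hσp ▸ lt_sigma_one (Nat.one_lt_pow hk0 hp.one_lt)
  have hk1 : k = 1 := by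
    by_contra hk1
    have h5k := two_mul_sq_succ_lt_five_pow (by omega : 2 ≤ k)
    have hpk := Nat.pow_le_pow_left hp5 k
    have hmk2 : m ^ 2 ≤ (k + 1) ^ 2 := Nat.pow_le_pow_left hmk 2
    omega
  subst hk1
  have hm1 : m = 1 := by
    have := Nat.odd_iff.mp hm
    omega
  subst hm1
  rw [pow_one] at hlt
  omega

end SigmaSqEqPrimePow

theorem exists_sigma_eq_prime_pow_mul_of_perfect {p k n : ℕ} (hp : p.Prime) (hcop : p.Coprime n)
    (hperf : (p ^ k * n).Perfect) :
    ∃ t, σ 1 n = p ^ k * t ∧ σ 1 (p ^ k) * t = 2 * n := by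
  have hσ : σ 1 (p ^ k) * σ 1 n = p ^ k * (2 * n) := by
    rw [← isMultiplicative_sigma.map_mul_of_coprime (hcop.pow_left k),
      sigma_one_eq_two_mul_of_perfect hperf]
    ring
  have hcopσ : (p ^ k).Coprime (σ 1 (p ^ k)) :=
    (hp.coprime_iff_not_dvd.mpr (not_dvd_sigma_one_prime_pow hp k)).pow_left k
  obtain ⟨t, ht⟩ := hcopσ.dvd_of_dvd_mul_left (Dvd.intro _ hσ.symm)
  refine ⟨t, ht, Nat.eq_of_mul_eq_mul_left (pow_pos hp.pos k) ?_⟩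
  rw [← hσ, ht]
  ring

theorem stmt_12 (p k m : ℕ) (hp : p.Prime) (hp4 : p % 4 = 1) (hk4 : k % 4 = 1)
    (hcop : Nat.Coprime p m) (hodd : Odd (p ^ k * m ^ 2))
    (hperf : Nat.Perfect (p ^ k * m ^ 2)) :
    (p ^ k : ℚ) < 2 / 3 * (m ^ 2 : ℚ) := by
  have hp5 : 5 ≤ p := by have := hp.two_le; omega
  have hm : Odd m := (Nat.odd_pow_iff two_ne_zero).mp (Nat.odd_mul.mp hodd).2
  obtain ⟨t, hσm, hσp⟩ := exists_sigma_eq_prime_pow_mul_of_perfect hp (hcop.pow_right 2) hperf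
  obtain ⟨v, hv⟩ : 2 ∣ σ 1 (p ^ k) := even_iff_two_dvd.mp <|
    (even_sigma_one_prime_pow_iff hp (Nat.odd_iff.mpr (by omega))).mpr (Nat.odd_iff.mpr (by omega))
  have ht : Odd t := by
    have hvt : v * t = m ^ 2 := by
      rw [hv, mul_assoc] at hσp
      exact Nat.eq_of_mul_eq_mul_left two_pos hσp
    exact (Nat.odd_mul.mp (hvt ▸ hm.pow)).2
  have ht1 : t ≠ 1 := by
    rintro rfl
    exact sigma_sq_ne_prime_pow hp hp5 hm (by simpa using hσp) (by simpa using hσm)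
  have ht3 : 3 ≤ t := by have := Nat.odd_iff.mp ht; omega
  have hlt := lt_sigma_one (Nat.one_lt_pow (by omega : k ≠ 0) hp.one_lt)
  have h : 3 * p ^ k < 2 * m ^ 2 := by nlinarith
  have h' : (3 * p ^ k : ℚ) < 2 * m ^ 2 := by exact_mod_cast h
  linarith
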